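/- Let Δ be a root system of type C_n with simple roots α_1,...,α_n (α_n long), and fix 1 ≤ k ≤ n. Write a positive integer d as d = mk + r with m, r integers and 1 ≤ r ≤ k. Define λ' = m·Σ_{j=1}^{k-1} j·α_j^∨ + Σ_{j=1}^{r-1} j·α_{k-r+j}^∨ + d·Σ_{j=k}^{n} α_j^∨. Then ⟨α_i, λ'⟩ = -1 if i = k-r, and ⟨α_i, λ'⟩ = 0 for all other i with i ≠ k. In particular, ⟨γ, λ'⟩ ∈ {0, -1} for every positive root γ in the root subsystem generated by {α_i : i ≠ k}. -/
import Mathlib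


open Finset

/-- The Cartan pairing `⟨α_i, α_j^∨⟩` of type `C_n` (1-indexed, Bourbaki/Humphreys
labelling, `α_n` the long root). -/
def cartanC (n : ℕ) (i j : ℕ) : ℤ :=
  if i = j then 2
  else if i = n ∧ j + 1 = n then -2
  else if i + 1 = j ∨ j + 1 = i then -1
  else 0

/-- Pairing `⟨α_i, λ⟩` of the simple root `α_i` with an element
`λ = ∑_{j=1}^n (lam j) α_j^∨` of the coroot lattice of type `C_n`. -/
def pairC (n : ℕ) (i : ℕ) (lam : ℕ → ℤ) : ℤ :=
  ∑ j ∈ Finset.Icc 1 n, cartanC n i j * lam j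

/-- Pairing `⟨γ, λ⟩` where `γ = ∑_{i=1}^n (c i) α_i`. -/
def pairVecC (n : ℕ) (c : ℕ → ℤ) (lam : ℕ → ℤ) : ℤ :=
  ∑ i ∈ Finset.Icc 1 n, c i * pairC n i lam

/-- The element `λ' = m ∑_{j=1}^{k-1} j α_j^∨ + ∑_{j=1}^{r-1} j α_{k-r+j}^∨
+ d ∑_{j=k}^n α_j^∨` of the coroot lattice, written coordinatewise. -/
def lamC (n k d m r : ℕ) : ℕ → ℤ := fun t =>
  (if 1 ≤ t ∧ t ≤ k - 1 then (m : ℤ) * t else 0) +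
  (if k - r + 1 ≤ t ∧ t ≤ k - 1 then (t : ℤ) - (k - r : ℕ) else 0) +
  (if k ≤ t ∧ t ≤ n then (d : ℤ) else 0)

/-- The coordinate vector of the positive roots of type `C_n` in terms of the simple
roots: `e_i − e_j = α_i + ⋯ + α_{j-1}`, `e_i + e_j = α_i + ⋯ + α_{j-1} + 2α_j + ⋯
+ 2α_{n-1} + α_n` (for `i < j`), and `2e_i = 2α_i + ⋯ + 2α_{n-1} + α_n`. -/
def posRootsCoeffC (n : ℕ) : Set (ℕ → ℤ) :=
  {c | ∃ i j, 1 ≤ i ∧ i < j ∧ j ≤ n ∧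
      c = fun t => if i ≤ t ∧ t ≤ j - 1 then 1 else 0} ∪
  {c | ∃ i j, 1 ≤ i ∧ i < j ∧ j ≤ n ∧
      c = fun t => (if i ≤ t ∧ t ≤ j - 1 then 1 else 0) +
        2 * (if j ≤ t ∧ t ≤ n - 1 then 1 else 0) + (if t = n then 1 else 0)} ∪
  {c | ∃ i, 1 ≤ i ∧ i ≤ n ∧
      c = fun t => 2 * (if i ≤ t ∧ t ≤ n - 1 then 1 else 0) + (if t = n then 1 else 0)}

/- STATEMENT 3 (Lemma: Peterson–Woodward lift for `IG(k,2n)`): writing `d = mk + r` with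
`1 ≤ r ≤ k`, the element `λ'` pairs with the simple roots by `⟨α_i, λ'⟩ = -1` if
`i = k - r` and `0` for all other `i ≠ k`; in particular `⟨γ, λ'⟩ ∈ {0, -1}` for every
positive root `γ` of the subsystem generated by `{α_i : i ≠ k}` (i.e. with zero
coefficient on `α_k`). -/
lemma pairC_eq (n i : ℕ) (lam : ℕ → ℤ) (hi1 : 1 ≤ i) (hin : i ≤ n)
    (h0 : lam 0 = 0) (hn1 : lam (n+1) = 0) :
    pairC n i lam = 2 * lam i - lam (i-1) - lam (i+1) -
      (if i = n then lam (n-1) else 0) := by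
  unfold pairC
  have key : ∀ j ∈ Finset.Icc 1 n, cartanC n i j * lam j =
      2 * (if i = j then lam j else 0) - (if i + 1 = j then lam j else 0)
      - (if i - 1 = j then lam j else 0)
      - (if i = n then (1:ℤ) else 0) * (if n - 1 = j then lam j else 0) := by
    intro j hj
    simp only [Finset.mem_Icc] at hj
    unfold cartanC
    split_ifs <;> first | (exfalso; omega) | ring
  rw [Finset.sum_congr rfl key]
  rw [Finset.sum_sub_distrib, Finset.sum_sub_distrib, Finset.sum_sub_distrib,
    ← Finset.mul_sum, ← Finset.mul_sum, Finset.sum_ite_eq, Finset.sum_ite_eq,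
    Finset.sum_ite_eq, Finset.sum_ite_eq]
  simp only [Finset.mem_Icc]
  have e1 : (if 1 ≤ i ∧ i ≤ n then lam i else 0) = lam i := by
    rw [if_pos ⟨hi1, hin⟩]
  have e2 : (if 1 ≤ i + 1 ∧ i + 1 ≤ n then lam (i+1) else 0) = lam (i+1) := by
    by_cases h : i + 1 ≤ n
    · rw [if_pos ⟨by omega, h⟩]
    · have hh : i + 1 = n + 1 := by omega
      rw [if_neg (by omega), hh, hn1]
  have e3 : (if 1 ≤ i - 1 ∧ i - 1 ≤ n then lam (i-1) else 0) = lam (i-1) := by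
    by_cases h : 1 ≤ i - 1
    · rw [if_pos ⟨h, by omega⟩]
    · have hh : i - 1 = 0 := by omega
      rw [hh, if_neg (by omega), h0]
  rw [e1, e2, e3]
  by_cases hn : i = n
  · have e4 : (if 1 ≤ n - 1 ∧ n - 1 ≤ n then lam (n-1) else 0) = lam (n-1) := by
      by_cases h : 1 ≤ n - 1
      · rw [if_pos ⟨h, by omega⟩]
      · have hh : n - 1 = 0 := by omega
        rw [hh, if_neg (by omega), h0]
    rw [e4, if_pos hn, if_pos hn]; ring
  · rw [if_neg hn, if_neg hn]; ring

def fC (n k : ℕ) : ℕ → ℤ := fun t =>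
  (if 1 ≤ t ∧ t ≤ k - 1 then (t : ℤ) else 0) +
  (if k ≤ t ∧ t ≤ n then (k : ℤ) else 0)

def gC (n k r : ℕ) : ℕ → ℤ := fun t =>
  (if k - r + 1 ≤ t ∧ t ≤ k - 1 then (t : ℤ) - (k - r : ℕ) else 0) +
  (if k ≤ t ∧ t ≤ n then (r : ℤ) else 0)

lemma lamC_split (n k d m r : ℕ) (hd : d = m * k + r) (t : ℕ) :
    lamC n k d m r t = (m : ℤ) * fC n k t + gC n k r t := by
  subst hd
  simp only [lamC, fC, gC]
  split_ifs <;> push_cast <;> ring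

lemma fC_claim (n k : ℕ) (hk1 : 1 ≤ k) (hkn : k ≤ n) (i : ℕ)
    (hi1 : 1 ≤ i) (hin : i ≤ n) (hik : i ≠ k) :
    2 * fC n k i - fC n k (i-1) - fC n k (i+1) -
      (if i = n then fC n k (n-1) else 0) = 0 := by
  simp only [fC]
  split_ifs <;> omega

set_option maxHeartbeats 2000000 in
lemma gC_claim (n k r : ℕ) (hk1 : 1 ≤ k) (hkn : k ≤ n) (hr1 : 1 ≤ r) (hrk : r ≤ k)
    (i : ℕ) (hi1 : 1 ≤ i) (hin : i ≤ n) (hik : i ≠ k) :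
    2 * gC n k r i - gC n k r (i-1) - gC n k r (i+1) -
      (if i = n then gC n k r (n-1) else 0) = if i = k - r then -1 else 0 := by
  simp only [gC]
  split_ifs <;> omega

lemma coeff_mem01 (n k r : ℕ) (c : ℕ → ℤ) (hc : c ∈ posRootsCoeffC n)
    (hck : c k = 0) (hkn : k ≤ n) (hr1 : 1 ≤ r) (h1 : 1 ≤ k - r) :
    c (k - r) = 0 ∨ c (k - r) = 1 := by
  have hlt : k - r < k := by omega
  simp only [posRootsCoeffC, Set.mem_union, Set.mem_setOf_eq] at hc
  rcases hc with (⟨i, j, hi, hij, hjn, rfl⟩ | ⟨i, j, hi, hij, hjn, rfl⟩) | ⟨i, hi, hin, rfl⟩ <;>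
    dsimp only at hck ⊢ <;> split_ifs at hck ⊢ <;> omega

theorem lamC_pairings (n k d m r : ℕ) (hk1 : 1 ≤ k) (hkn : k ≤ n)
    (hd : d = m * k + r) (hr1 : 1 ≤ r) (hrk : r ≤ k) :
    (∀ i, 1 ≤ i → i ≤ n → i ≠ k →
      pairC n i (lamC n k d m r) = if i = k - r then -1 else 0) ∧
    (∀ c ∈ posRootsCoeffC n, c k = 0 →
      pairVecC n c (lamC n k d m r) ∈ ({0, -1} : Set ℤ)) := by
  have h0 : lamC n k d m r 0 = 0 := by
    simp only [lamC]
    rw [if_neg (by omega), if_neg (by omega), if_neg (by omega)]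
    ring
  have hn1 : lamC n k d m r (n+1) = 0 := by
    simp only [lamC]
    rw [if_neg (by omega), if_neg (by omega), if_neg (by omega)]
    ring
  have part1 : ∀ i, 1 ≤ i → i ≤ n → i ≠ k →
      pairC n i (lamC n k d m r) = if i = k - r then -1 else 0 := by
    intro i hi1 hin hik
    rw [pairC_eq n i _ hi1 hin h0 hn1]
    simp only [lamC_split n k d m r hd]
    have hf := fC_claim n k hk1 hkn i hi1 hin hik
    have hg := gC_claim n k r hk1 hkn hr1 hrk i hi1 hin hik
    split_ifs at hf hg ⊢ <;> linear_combination (m : ℤ) * hf + hg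
  refine ⟨part1, ?_⟩
  intro c hc hck
  have hterm : ∀ i ∈ Finset.Icc 1 n,
      c i * pairC n i (lamC n k d m r) = if i = k - r then -(c i) else 0 := by
    intro i hi
    simp only [Finset.mem_Icc] at hi
    by_cases h : i = k
    · subst h
      rw [hck]
      split_ifs <;> ring
    · rw [part1 i hi.1 hi.2 h]
      split_ifs <;> ring
  unfold pairVecC
  rw [Finset.sum_congr rfl hterm, Finset.sum_ite_eq' (Finset.Icc 1 n) (k - r) (fun i => -(c i))]
  simp only [Set.mem_insert_iff, Set.mem_singleton_iff, Finset.mem_Icc]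
  by_cases hmem : 1 ≤ k - r ∧ k - r ≤ n
  · rw [if_pos hmem]
    rcases coeff_mem01 n k r c hc hck hkn hr1 hmem.1 with h | h
    · left; rw [h]; ring
    · right; rw [h]
  · rw [if_neg hmem]; left; rfl
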